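/- Let G be a finite bipartite graph and I ⊆ V(G) an independent set (no edge has both endpoints in I). Then Σ_{v ∈ I} E_G(v) ≤ (1/2) E(G). -/

import Mathlib

open Matrix BigOperators Finset Polynomial

noncomputable def adjMat {V : Type*} [Fintype V] (G : SimpleGraph V) : Matrix V V ℝ :=
  letI := Classical.decRel G.Adj; G.adjMatrix ℝ

noncomputable def absMat {V : Type*} [Fintype V] [DecidableEq V] (A : Matrix V V ℝ) :
    Matrix V V ℝ :=
  (Matrix.posSemidef_self_mul_conjTranspose A).1.eigenvectorUnitary.1 *
    Matrix.diagonal (Real.sqrt ∘ (Matrix.posSemidef_self_mul_conjTranspose A).1.eigenvalues) *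
    (star (Matrix.posSemidef_self_mul_conjTranspose A).1.eigenvectorUnitary : Matrix V V ℝ)

/-- The energy of a vertex: the (i,i) entry of |A| = (A Aᴴ)^{1/2}. -/
noncomputable def vertexEnergy {V : Type*} [Fintype V] [DecidableEq V]
    (G : SimpleGraph V) (i : V) : ℝ :=
  absMat (adjMat G) i i

/-- The energy of a graph: the trace of |A| (equivalently the sum of vertex energies). -/
noncomputable def graphEnergy {V : Type*} [Fintype V] [DecidableEq V]
    (G : SimpleGraph V) : ℝ :=
  Matrix.trace (absMat (adjMat G))


/-!
Let `A` be the adjacency matrix and `P` the diagonal projection onto `I`. Independence of `I`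
means `P A P = 0`, so with the reflection `D = 2P - 1` we get the pinching identity
`P A + A P = (A - D A D) / 2`.

For symmetric `M` the trace norm `‖M‖₁ = ∑ |λᵢ(M)|` is the maximum of `tr (C M)` over
matrices `C` whose quadratic form is bounded by `|x|²`, attained at `C = sign M`; this class
of `C` is closed under orthogonal conjugation and under `(C - C') / 2`. Hence
`2 tr (P |A|) = tr (sign A · (P A + A P)) ≤ ‖(A - D A D) / 2‖₁ ≤ ‖A‖₁ = E(G)`,
while `tr (P |A|) = ∑_{v ∈ I} E_G(v)`.
-/

lemma abs_sign_le_one {α : Type*} [Ring α] [LinearOrder α] [IsStrictOrderedRing α] (x : α) :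
    |(SignType.sign x : α)| ≤ 1 := by
  rcases lt_trichotomy x 0 with h | rfl | h <;> simp [*]

namespace Matrix

variable {n : Type*} [Fintype n]

def HasNumericalRadiusLeOne (C : Matrix n n ℝ) : Prop :=
  ∀ x : n → ℝ, |x ⬝ᵥ C *ᵥ x| ≤ x ⬝ᵥ x

lemma dotProduct_mulVec_eq_star_mulVec_dotProduct (U : Matrix n n ℝ) (x y : n → ℝ) :
    x ⬝ᵥ U *ᵥ y = (star U *ᵥ x) ⬝ᵥ y := by
  rw [dotProduct_mulVec, star_eq_conjTranspose, conjTranspose_eq_transpose_of_trivial,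
    mulVec_transpose]

lemma HasNumericalRadiusLeOne.half_smul_sub {C C' : Matrix n n ℝ}
    (hC : C.HasNumericalRadiusLeOne) (hC' : C'.HasNumericalRadiusLeOne) :
    ((1 / 2 : ℝ) • (C - C')).HasNumericalRadiusLeOne := by
  intro x
  have h := abs_le.mp (hC x)
  have h' := abs_le.mp (hC' x)
  rw [smul_mulVec, sub_mulVec, dotProduct_smul, dotProduct_sub, smul_eq_mul, abs_le]
  constructor <;> linarith

lemma isHermitian_mul_add_mul {A P : Matrix n n ℝ} (hA : A.IsHermitian) (hP : P.IsHermitian) :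
    (P * A + A * P).IsHermitian := by
  rw [IsHermitian, conjTranspose_add, conjTranspose_mul, conjTranspose_mul, hA.eq, hP.eq,
    add_comm]

variable [DecidableEq n]

lemma star_mulVec_dotProduct_star_mulVec {U : Matrix n n ℝ} (hU : U ∈ unitaryGroup n ℝ)
    (x : n → ℝ) : (star U *ᵥ x) ⬝ᵥ (star U *ᵥ x) = x ⬝ᵥ x := by
  rw [← dotProduct_mulVec_eq_star_mulVec_dotProduct, mulVec_mulVec, mem_unitaryGroup_iff.mp hU,
    one_mulVec]

lemma hasNumericalRadiusLeOne_diagonal {d : n → ℝ} (hd : ∀ i, |d i| ≤ 1) :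
    (diagonal d).HasNumericalRadiusLeOne := by
  intro x
  simp only [mulVec_diagonal, dotProduct]
  calc |∑ i, x i * (d i * x i)| ≤ ∑ i, |x i * (d i * x i)| := abs_sum_le_sum_abs _ _
    _ ≤ ∑ i, x i * x i := sum_le_sum fun i _ => by
        rw [show x i * (d i * x i) = d i * (x i * x i) by ring, abs_mul, abs_mul_self]
        exact mul_le_of_le_one_left (mul_self_nonneg _) (hd i)

namespace HasNumericalRadiusLeOne

variable {C : Matrix n n ℝ}

lemma abs_apply_self_le_one (hC : C.HasNumericalRadiusLeOne) (i : n) : |C i i| ≤ 1 := by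
  simpa using hC (Pi.single i 1)

lemma conj (hC : C.HasNumericalRadiusLeOne) {U : Matrix n n ℝ} (hU : U ∈ unitaryGroup n ℝ) :
    (U * C * star U).HasNumericalRadiusLeOne := by
  intro x
  rw [← mulVec_mulVec, ← mulVec_mulVec, dotProduct_mulVec_eq_star_mulVec_dotProduct,
    ← star_mulVec_dotProduct_star_mulVec hU x]
  exact hC _

end HasNumericalRadiusLeOne

namespace IsHermitian

variable {B : Matrix n n ℝ}

lemma cfc_eq_conj_diagonal (hB : B.IsHermitian) (f : ℝ → ℝ) :
    cfc f B = (hB.eigenvectorUnitary : Matrix n n ℝ) * diagonal (f ∘ hB.eigenvalues) *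
      star (hB.eigenvectorUnitary : Matrix n n ℝ) := by
  rw [hB.cfc_eq, IsHermitian.cfc, Unitary.conjStarAlgAut_apply, RCLike.ofReal_real_eq_id]
  rfl
lemma trace_cfc (hB : B.IsHermitian) (f : ℝ → ℝ) :
    trace (cfc f B) = ∑ i, f (hB.eigenvalues i) := by
  rw [hB.cfc_eq_conj_diagonal, trace_mul_cycle, mem_unitaryGroup_iff'.mp hB.eigenvectorUnitary.2,
    one_mul, trace_diagonal]
  rfl

lemma cfc_mul_self (hB : B.IsHermitian) (f : ℝ → ℝ) :
    cfc f B * B = cfc (fun t => f t * t) B := by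
  nth_rw 2 [← cfc_id' ℝ B hB.isSelfAdjoint]
  exact (cfc_mul f (fun t => t) B (B.finite_real_spectrum.continuousOn _)).symm

lemma self_mul_cfc (hB : B.IsHermitian) (f : ℝ → ℝ) :
    B * cfc f B = cfc (fun t => t * f t) B := by
  nth_rw 1 [← cfc_id' ℝ B hB.isSelfAdjoint]
  exact (cfc_mul (fun t => t) f B (continuousOn_id' _)
    (B.finite_real_spectrum.continuousOn _)).symm

lemma trace_mul_le_sum_abs_eigenvalues (hB : B.IsHermitian) {C : Matrix n n ℝ}
    (hC : C.HasNumericalRadiusLeOne) : trace (C * B) ≤ ∑ i, |hB.eigenvalues i| := by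
  set U : Matrix n n ℝ := ↑hB.eigenvectorUnitary
  have hCU : (star U * C * U).HasNumericalRadiusLeOne := by
    simpa using hC.conj (Unitary.star_mem hB.eigenvectorUnitary.2)
  nth_rw 1 [← cfc_id' ℝ B hB.isSelfAdjoint]
  rw [hB.cfc_eq_conj_diagonal, ← mul_assoc, ← mul_assoc, trace_mul_cycle, ← mul_assoc]
  simp only [trace, diag, mul_diagonal, Function.comp_apply]
  refine sum_le_sum fun i _ => ?_
  calc (star U * C * U) i i * hB.eigenvalues i
      ≤ |(star U * C * U) i i| * |hB.eigenvalues i| := (le_abs_self _).trans (abs_mul _ _).le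
    _ ≤ |hB.eigenvalues i| :=
        mul_le_of_le_one_left (abs_nonneg _) (hCU.abs_apply_self_le_one i)

lemma hasNumericalRadiusLeOne_cfc (hB : B.IsHermitian) {f : ℝ → ℝ} (hf : ∀ t, |f t| ≤ 1) :
    (cfc f B).HasNumericalRadiusLeOne := by
  rw [hB.cfc_eq_conj_diagonal]
  exact (hasNumericalRadiusLeOne_diagonal fun i => hf _).conj hB.eigenvectorUnitary.2

lemma trace_cfc_sign_mul_self (hB : B.IsHermitian) :
    trace (cfc (fun t : ℝ => (SignType.sign t : ℝ)) B * B) = ∑ i, |hB.eigenvalues i| := by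
  simp only [hB.cfc_mul_self, hB.trace_cfc, sign_mul_self]

end IsHermitian

theorem sum_abs_eigenvalues_le_of_eq_half_smul_sub_conj {A M U : Matrix n n ℝ}
    (hA : A.IsHermitian) (hM : M.IsHermitian) (hU : U ∈ unitaryGroup n ℝ)
    (hMA : M = (1 / 2 : ℝ) • (A - star U * A * U)) :
    ∑ i, |hM.eigenvalues i| ≤ ∑ i, |hA.eigenvalues i| := by
  set W := cfc (fun t : ℝ => (SignType.sign t : ℝ)) M
  have hW : W.HasNumericalRadiusLeOne := hM.hasNumericalRadiusLeOne_cfc abs_sign_le_one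
  calc ∑ i, |hM.eigenvalues i| = trace (W * M) := hM.trace_cfc_sign_mul_self.symm
    _ = trace ((1 / 2 : ℝ) • (W - U * W * star U) * A) := by
        have hconj : trace (W * (star U * A * U)) = trace (U * W * star U * A) := by
          rw [← mul_assoc, trace_mul_cycle, ← mul_assoc]
        rw [hMA, Matrix.mul_smul, Matrix.smul_mul, trace_smul, trace_smul, mul_sub, sub_mul,
          trace_sub, trace_sub, hconj]
    _ ≤ ∑ i, |hA.eigenvalues i| :=
        hA.trace_mul_le_sum_abs_eigenvalues (hW.half_smul_sub (hW.conj hU))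

theorem two_mul_trace_mul_cfc_abs_le {A P : Matrix n n ℝ} (hA : A.IsHermitian)
    (hM : (P * A + A * P).IsHermitian) :
    2 * trace (P * cfc (fun t : ℝ => |t|) A) ≤ ∑ i, |hM.eigenvalues i| := by
  set S := cfc (fun t : ℝ => (SignType.sign t : ℝ)) A
  have hSA : S * A = cfc (fun t : ℝ => |t|) A := by simp only [S, hA.cfc_mul_self, sign_mul_self]
  have hAS : A * S = cfc (fun t : ℝ => |t|) A := by simp only [S, hA.self_mul_cfc, self_mul_sign]
  have hPAS : trace (S * (P * A)) = trace (P * cfc (fun t : ℝ => |t|) A) := by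
    rw [trace_mul_comm, mul_assoc, hAS]
  have hSAP : trace (S * (A * P)) = trace (P * cfc (fun t : ℝ => |t|) A) := by
    rw [← mul_assoc, hSA, trace_mul_comm]
  calc 2 * trace (P * cfc (fun t : ℝ => |t|) A) = trace (S * (P * A + A * P)) := by
        rw [mul_add, trace_add, hPAS, hSAP]
        ring
    _ ≤ ∑ i, |hM.eigenvalues i| :=
        hM.trace_mul_le_sum_abs_eigenvalues (hA.hasNumericalRadiusLeOne_cfc abs_sign_le_one)

lemma mul_add_mul_eq_half_smul_sub_conj {A P : Matrix n n ℝ} (hP : IsSelfAdjoint P)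
    (hPAP : P * A * P = 0) :
    P * A + A * P = (1 / 2 : ℝ) • (A - star (2 * P - 1) * A * (2 * P - 1)) := by
  have hU : star (2 * P - 1) = 2 * P - 1 := by
    rw [star_sub, star_one, two_mul, star_add, hP.star_eq]
  have hexpand :
      (2 * P - 1) * A * (2 * P - 1) = 4 * (P * A * P) - 2 * (P * A + A * P) + A := by
    noncomm_ring
  rw [hU, hexpand, hPAP, mul_zero, zero_sub, two_mul]
  module

lemma isStarProjection_diagonal_indicator (s : Finset n) :
    IsStarProjection (diagonal fun i => if i ∈ s then (1 : ℝ) else 0) where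
  isIdempotentElem := by
    rw [IsIdempotentElem, diagonal_mul_diagonal]
    congr 1
    ext i
    split_ifs <;> simp
  isSelfAdjoint := by
    rw [IsSelfAdjoint, star_eq_conjTranspose, diagonal_conjTranspose]
    rfl

lemma trace_diagonal_indicator_mul (s : Finset n) (X : Matrix n n ℝ) :
    trace (diagonal (fun i => if i ∈ s then (1 : ℝ) else 0) * X) = ∑ i ∈ s, X i i := by
  simp [trace, diagonal_mul, Finset.sum_ite_mem]

lemma diagonal_indicator_mul_mul_diagonal_indicator_eq_zero {s : Finset n} {X : Matrix n n ℝ}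
    (hX : ∀ a ∈ s, ∀ b ∈ s, X a b = 0) :
    diagonal (fun i => if i ∈ s then (1 : ℝ) else 0) * X *
      diagonal (fun i => if i ∈ s then (1 : ℝ) else 0) = 0 := by
  ext a b
  by_cases ha : a ∈ s <;> by_cases hb : b ∈ s <;> simp [diagonal_mul, mul_diagonal, *]

end Matrix

lemma absMat_eq_cfc_abs {n : Type*} [Fintype n] [DecidableEq n] {A : Matrix n n ℝ}
    (hA : A.IsHermitian) :
    absMat A = cfc (fun t : ℝ => |t|) A := by
  have hAA := (posSemidef_self_mul_conjTranspose A).1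
  calc absMat A = cfc Real.sqrt (A * Aᴴ) := by
        rw [hAA.cfc_eq]
        simp [absMat, IsHermitian.cfc, RCLike.ofReal_real_eq_id]
    _ = cfc Real.sqrt (cfc (fun t : ℝ => t * t) A) := by
        rw [hA.eq, cfc_mul (fun t : ℝ => t) (fun t : ℝ => t) A, cfc_id' ℝ A hA.isSelfAdjoint]
    _ = cfc (fun t : ℝ => |t|) A := by
        rw [← cfc_comp' Real.sqrt (fun t : ℝ => t * t) A]
        simp only [Real.sqrt_mul_self_eq_abs]

section Energy

variable {V : Type*} [Fintype V] (G : SimpleGraph V)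

lemma adjMat_isHermitian : (adjMat G).IsHermitian := by
  let := Classical.decRel G.Adj
  exact G.isHermitian_adjMatrix ℝ

lemma adjMat_apply_eq_zero {u v : V} (h : ¬ G.Adj u v) : adjMat G u v = 0 := by
  simp [adjMat, h]

variable [DecidableEq V]

lemma vertexEnergy_eq_cfc_abs (v : V) :
    vertexEnergy G v = cfc (fun t : ℝ => |t|) (adjMat G) v v := by
  rw [vertexEnergy, absMat_eq_cfc_abs (adjMat_isHermitian G)]

lemma graphEnergy_eq_sum_abs_eigenvalues :
    graphEnergy G = ∑ i, |(adjMat_isHermitian G).eigenvalues i| := by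
  rw [graphEnergy, absMat_eq_cfc_abs (adjMat_isHermitian G), (adjMat_isHermitian G).trace_cfc]

end Energy

theorem independent_set_energy_inequality_general {V : Type*} [Fintype V] [DecidableEq V]
    (G : SimpleGraph V) (I : Finset V)
    (hI : ∀ a ∈ I, ∀ b ∈ I, ¬ G.Adj a b) :
    ∑ v ∈ I, vertexEnergy G v ≤ (1 / 2) * graphEnergy G := by
  set A := adjMat G
  set P : Matrix V V ℝ := diagonal fun v => if v ∈ I then 1 else 0
  have hA : A.IsHermitian := adjMat_isHermitian G
  have hP : IsStarProjection P := isStarProjection_diagonal_indicator I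
  have hPAP : P * A * P = 0 := diagonal_indicator_mul_mul_diagonal_indicator_eq_zero
    fun a ha b hb => adjMat_apply_eq_zero G (hI a ha b hb)
  have hM : (P * A + A * P).IsHermitian :=
    isHermitian_mul_add_mul hA hP.isSelfAdjoint.isHermitian
  have hpinch := sum_abs_eigenvalues_le_of_eq_half_smul_sub_conj hA hM
    hP.two_mul_sub_one_mem_unitary (mul_add_mul_eq_half_smul_sub_conj hP.isSelfAdjoint hPAP)
  have htrace : ∑ v ∈ I, vertexEnergy G v = trace (P * cfc (fun t : ℝ => |t|) A) := by
    rw [trace_diagonal_indicator_mul]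
    exact sum_congr rfl fun v _ => vertexEnergy_eq_cfc_abs G v
  rw [htrace, graphEnergy_eq_sum_abs_eigenvalues]
  linarith [two_mul_trace_mul_cfc_abs_le hA hM]

/-- for a bipartite graph G and an independent set I,
Σ_{v ∈ I} E_G(v) ≤ (1/2)·E(G). -/
theorem independent_set_energy_inequality {V : Type*} [Fintype V] [DecidableEq V]
    (G : SimpleGraph V) (hG : G.Colorable 2) (I : Finset V)
    (hI : ∀ a ∈ I, ∀ b ∈ I, ¬ G.Adj a b) :
    ∑ v ∈ I, vertexEnergy G v ≤ (1 / 2) * graphEnergy G :=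
  independent_set_energy_inequality_general G I hI
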